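/- Let 1 < q < 2, p > 4, A > 0, B ≥ 0, D > 0, and define s(t) = A t^{2−q} + B t^{4−q} − D t^{p−q} for t > 0 and, for F ∈ ℝ, φ_F(t) = (A/2)t² + (B/4)t⁴ − (F/q)t^q − (D/p)t^p for t ≥ 0. Let t_max be the unique maximizer of s on (0,∞). If F ≤ 0, then there is a unique t⁻ > t_max with s(t⁻) = F; t⁻ is the unique solution of s(t) = F in (0,∞); φ_F is strictly increasing on (0, t⁻) and strictly decreasing on (t⁻, ∞); and φ_F(t⁻) = sup_{t ≥ 0} φ_F(t). -/

import Mathlib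

/-!
Write `s(t) = t^{p-q} m(t)` and `s'(t) = t^{p-q-1} n(t)`, where `m = sFibRatio` and
`n = sFibDerivRatio`. Because `p > 4`, `n` is strictly decreasing, so it vanishes exactly at the
critical point `t_max`, and `s` strictly decreases on `[t_max, ∞)` towards `-∞`. Moreover
`n < (p - q) m`, so `s > 0` wherever `n ≥ 0`, i.e. on `(0, t_max]`. Hence for `F ≤ 0` the
equation `s = F` has a single root `t⁻ > t_max`, with `s - F` positive before it and negative
after it; as `φ_F' = t^{q-1} (s - F)`, `φ_F` rises up to `t⁻` and falls afterwards.
-/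

open Set

/-- The fibering auxiliary function `s(t) = A t^{2-q} + B t^{4-q} - D t^{p-q}`. -/
noncomputable def sFib (q p A B D t : ℝ) : ℝ :=
  A * t ^ (2 - q) + B * t ^ (4 - q) - D * t ^ (p - q)

/-- The fibering map `φ_F(t) = (A/2)t² + (B/4)t⁴ - (F/q)t^q - (D/p)t^p`. -/
noncomputable def phiFib (q p A B D F t : ℝ) : ℝ :=
  A / 2 * t ^ (2 : ℝ) + B / 4 * t ^ (4 : ℝ) - F / q * t ^ q - D / p * t ^ p

open Filter Topology

noncomputable def sFibRatio (p A B D t : ℝ) : ℝ :=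
  A * t ^ (2 - p) + B * t ^ (4 - p) - D

noncomputable def sFibDerivRatio (q p A B D t : ℝ) : ℝ :=
  A * (2 - q) * t ^ (2 - p) + B * (4 - q) * t ^ (4 - p) - D * (p - q)

section

variable {q p A B D : ℝ}

lemma sFib_eq_rpow_mul_sFibRatio {t : ℝ} (ht : 0 < t) :
    sFib q p A B D t = t ^ (p - q) * sFibRatio p A B D t := by
  have h2 : t ^ (2 - q) = t ^ (p - q) * t ^ (2 - p) := by rw [← Real.rpow_add ht]; ring_nf
  have h4 : t ^ (4 - q) = t ^ (p - q) * t ^ (4 - p) := by rw [← Real.rpow_add ht]; ring_nf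
  rw [sFib, sFibRatio, h2, h4]
  ring

lemma hasDerivAt_sFib {t : ℝ} (ht : 0 < t) :
    HasDerivAt (sFib q p A B D) (t ^ (p - q - 1) * sFibDerivRatio q p A B D t) t := by
  have hpow (r : ℝ) :
      HasDerivAt (fun x : ℝ => x ^ r) (r * t ^ (p - q - 1) * t ^ (r - (p - q))) t := by
    convert Real.hasDerivAt_rpow_const (p := r) (Or.inl ht.ne') using 1
    rw [mul_assoc, ← Real.rpow_add ht]
    ring_nf
  refine ((((hpow (2 - q)).const_mul A).add ((hpow (4 - q)).const_mul B)).sub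
    ((hpow (p - q)).const_mul D) : HasDerivAt (sFib q p A B D) _ t).congr_deriv ?_
  simp only [sFibDerivRatio, sub_self, Real.rpow_zero]
  ring_nf

lemma continuousOn_sFib : ContinuousOn (sFib q p A B D) (Ioi 0) :=
  fun _ ht => (hasDerivAt_sFib ht).continuousAt.continuousWithinAt

lemma tendsto_sFibRatio_atTop (hp : 4 < p) : Tendsto (sFibRatio p A B D) atTop (𝓝 (-D)) := by
  have h2 : Tendsto (fun t : ℝ => t ^ (2 - p)) atTop (𝓝 0) := by
    simpa only [neg_sub] using tendsto_rpow_neg_atTop (y := p - 2) (by linarith)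
  have h4 : Tendsto (fun t : ℝ => t ^ (4 - p)) atTop (𝓝 0) := by
    simpa only [neg_sub] using tendsto_rpow_neg_atTop (y := p - 4) (by linarith)
  unfold sFibRatio
  simpa using ((h2.const_mul A).add (h4.const_mul B)).sub_const D

lemma tendsto_sFib_atTop (hqp : q < p) (hp : 4 < p) (hD : 0 < D) :
    Tendsto (sFib q p A B D) atTop atBot := by
  refine ((tendsto_rpow_atTop (sub_pos.2 hqp)).atTop_mul_neg (neg_lt_zero.2 hD)
    (tendsto_sFibRatio_atTop (A := A) (B := B) hp)).congr' ?_
  filter_upwards [eventually_gt_atTop 0] with t ht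
  exact (sFib_eq_rpow_mul_sFibRatio ht).symm

lemma strictAntiOn_sFibDerivRatio (hq : q < 2) (hp : 4 ≤ p) (hA : 0 < A) (hB : 0 ≤ B) :
    StrictAntiOn (sFibDerivRatio q p A B D) (Ioi 0) := by
  intro a ha b _ hab
  have h2 : b ^ (2 - p) < a ^ (2 - p) := Real.rpow_lt_rpow_of_neg ha hab (by linarith)
  have h4 : b ^ (4 - p) ≤ a ^ (4 - p) := Real.rpow_le_rpow_of_nonpos ha hab.le (by linarith)
  have hA' : 0 < A * (2 - q) := mul_pos hA (by linarith)
  have hB' : 0 ≤ B * (4 - q) := mul_nonneg hB (by linarith)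
  simp only [sFibDerivRatio]
  linarith [mul_lt_mul_of_pos_left h2 hA', mul_le_mul_of_nonneg_left h4 hB']

lemma sFibDerivRatio_lt_mul_sFibRatio (hp : 4 ≤ p) (hA : 0 < A) (hB : 0 ≤ B) {t : ℝ}
    (ht : 0 < t) : sFibDerivRatio q p A B D t < (p - q) * sFibRatio p A B D t := by
  have h2 : 0 < A * (p - 2) * t ^ (2 - p) :=
    mul_pos (mul_pos hA (by linarith)) (Real.rpow_pos_of_pos ht _)
  have h4 : 0 ≤ B * (p - 4) * t ^ (4 - p) :=
    mul_nonneg (mul_nonneg hB (by linarith)) (Real.rpow_nonneg ht.le _)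
  simp only [sFibDerivRatio, sFibRatio]
  linarith

lemma sFibDerivRatio_eq_zero_of_isLocalMax {c : ℝ} (hc : 0 < c)
    (h : IsLocalMax (sFib q p A B D) c) : sFibDerivRatio q p A B D c = 0 :=
  (mul_eq_zero.1 (h.hasDerivAt_eq_zero (hasDerivAt_sFib hc))).resolve_left
    (Real.rpow_pos_of_pos hc _).ne'

variable (hq : q < 2) (hp : 4 ≤ p) (hA : 0 < A) (hB : 0 ≤ B) {c : ℝ}
  (hcrit : sFibDerivRatio q p A B D c = 0)
include hq hp hA hB hcrit

lemma strictAntiOn_sFib_Ici (hc : 0 < c) : StrictAntiOn (sFib q p A B D) (Ici c) := by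
  refine strictAntiOn_of_deriv_neg (convex_Ici c)
    (continuousOn_sFib.mono fun t ht => hc.trans_le ht) fun t ht => ?_
  rw [interior_Ici] at ht
  have ht0 : 0 < t := hc.trans ht
  rw [(hasDerivAt_sFib ht0).deriv]
  exact mul_neg_of_pos_of_neg (Real.rpow_pos_of_pos ht0 _)
    (hcrit ▸ strictAntiOn_sFibDerivRatio hq hp hA hB hc ht0 ht)

lemma sFib_pos_of_le {t : ℝ} (ht : 0 < t) (htc : t ≤ c) : 0 < sFib q p A B D t := by
  have hn : 0 ≤ sFibDerivRatio q p A B D t :=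
    hcrit ▸ (strictAntiOn_sFibDerivRatio hq hp hA hB).antitoneOn ht (ht.trans_le htc) htc
  have hm : 0 < sFibRatio p A B D t :=
    pos_of_mul_pos_right (hn.trans_lt (sFibDerivRatio_lt_mul_sFibRatio hp hA hB ht))
      (by linarith)
  rw [sFib_eq_rpow_mul_sFibRatio ht]
  exact mul_pos (Real.rpow_pos_of_pos ht _) hm

end

section

variable {q p A B D F : ℝ}

lemma hasDerivAt_phiFib (hq : q ≠ 0) (hp : p ≠ 0) {t : ℝ} (ht : 0 < t) :
    HasDerivAt (phiFib q p A B D F) (t ^ (q - 1) * (sFib q p A B D t - F)) t := by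
  have hpow (r : ℝ) :
      HasDerivAt (fun x : ℝ => x ^ r) (r * t ^ (q - 1) * t ^ (r - q)) t := by
    convert Real.hasDerivAt_rpow_const (p := r) (Or.inl ht.ne') using 1
    rw [mul_assoc, ← Real.rpow_add ht]
    ring_nf
  refine (((((hpow 2).const_mul (A / 2)).add ((hpow 4).const_mul (B / 4))).sub
    ((hpow q).const_mul (F / q))).sub ((hpow p).const_mul (D / p)) :
      HasDerivAt (phiFib q p A B D F) _ t).congr_deriv ?_
  simp only [sFib, sub_self, Real.rpow_zero]
  field_simp
  ring_nf

variable (hq : 0 < q) (hp : 0 < p)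
include hq hp

lemma continuous_phiFib : Continuous (phiFib q p A B D F) := by
  unfold phiFib
  fun_prop (disch := positivity)

lemma strictMonoOn_phiFib_Icc {c : ℝ} (hs : ∀ t ∈ Ioo 0 c, F < sFib q p A B D t) :
    StrictMonoOn (phiFib q p A B D F) (Icc 0 c) := by
  refine strictMonoOn_of_deriv_pos (convex_Icc 0 c) (continuous_phiFib hq hp).continuousOn
    fun t ht => ?_
  rw [interior_Icc] at ht
  rw [(hasDerivAt_phiFib hq.ne' hp.ne' ht.1).deriv]
  exact mul_pos (Real.rpow_pos_of_pos ht.1 _) (sub_pos.2 (hs t ht))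

lemma strictAntiOn_phiFib_Ici {c : ℝ} (hc : 0 ≤ c)
    (hs : ∀ t ∈ Ioi c, sFib q p A B D t < F) : StrictAntiOn (phiFib q p A B D F) (Ici c) := by
  refine strictAntiOn_of_deriv_neg (convex_Ici c) (continuous_phiFib hq hp).continuousOn
    fun t ht => ?_
  rw [interior_Ici] at ht
  have ht0 : 0 < t := hc.trans_lt ht
  rw [(hasDerivAt_phiFib hq.ne' hp.ne' ht0).deriv]
  exact mul_neg_of_pos_of_neg (Real.rpow_pos_of_pos ht0 _) (sub_neg.2 (hs t ht))

end

lemma exists_sFib_eq_of_nonpos {q p A B D F c : ℝ} (hq : q < 2) (hp : 4 < p) (hA : 0 < A)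
    (hB : 0 ≤ B) (hD : 0 < D) (hc : 0 < c) (hcrit : sFibDerivRatio q p A B D c = 0)
    (hF : F ≤ 0) :
    ∃ tm, c < tm ∧ sFib q p A B D tm = F ∧ (∀ t ∈ Ioo 0 tm, F < sFib q p A B D t) ∧
      ∀ t ∈ Ioi tm, sFib q p A B D t < F := by
  have hanti := strictAntiOn_sFib_Ici hq hp.le hA hB hcrit hc
  have hpos : F < sFib q p A B D c :=
    hF.trans_lt (sFib_pos_of_le hq hp.le hA hB hcrit hc le_rfl)
  have hlim : Tendsto (sFib q p A B D) atTop atBot := tendsto_sFib_atTop (by linarith) hp hD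
  obtain ⟨T, hsT, hT⟩ := ((hlim.eventually_lt_atBot F).and (eventually_gt_atTop c)).exists
  obtain ⟨tm, ⟨hctm, -⟩, hstm⟩ := intermediate_value_Icc' hT.le
    (continuousOn_sFib.mono fun t ht => hc.trans_le ht.1) ⟨hsT.le, hpos.le⟩
  have hctm : c < tm := hctm.lt_of_ne (by rintro rfl; exact hpos.ne' hstm)
  refine ⟨tm, hctm, hstm, ?_, fun t ht => hstm ▸ hanti hctm.le (hctm.trans ht).le ht⟩
  rintro t ⟨ht, htm⟩
  rcases le_or_gt t c with htc | hct
  · exact hF.trans_lt (sFib_pos_of_le hq hp.le hA hB hcrit ht htc)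
  · exact hstm ▸ hanti hct.le hctm.le htm

theorem phiFib_shape_of_nonpos (q p A B D F : ℝ) (hq1 : 1 < q) (hq2 : q < 2) (hp : 4 < p)
    (hA : 0 < A) (hB : 0 ≤ B) (hD : 0 < D)
    (tmax : ℝ) (htmax : 0 < tmax)
    (hmax : ∀ t, 0 < t → t ≠ tmax → sFib q p A B D t < sFib q p A B D tmax)
    (hF : F ≤ 0) :
    ∃ tm : ℝ, tmax < tm ∧ sFib q p A B D tm = F ∧
      (∀ t, 0 < t → sFib q p A B D t = F → t = tm) ∧
      StrictMonoOn (phiFib q p A B D F) (Ioo 0 tm) ∧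
      StrictAntiOn (phiFib q p A B D F) (Ioi tm) ∧
      (∀ t, 0 ≤ t → phiFib q p A B D F t ≤ phiFib q p A B D F tm) := by
  have hloc : IsLocalMax (sFib q p A B D) tmax := by
    filter_upwards [Ioi_mem_nhds htmax] with t ht
    rcases eq_or_ne t tmax with rfl | h
    exacts [le_rfl, (hmax t ht h).le]
  obtain ⟨tm, htm, hstm, hbelow, habove⟩ := exists_sFib_eq_of_nonpos hq2 hp hA hB hD htmax
    (sFibDerivRatio_eq_zero_of_isLocalMax htmax hloc) hF
  have htm0 : 0 < tm := htmax.trans htm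
  have hmono := strictMonoOn_phiFib_Icc (F := F) (by linarith) (by linarith) hbelow
  have hanti := strictAntiOn_phiFib_Ici (by linarith) (by linarith) htm0.le habove
  refine ⟨tm, htm, hstm, fun t ht hst => ?_, hmono.mono Ioo_subset_Icc_self,
    hanti.mono Ioi_subset_Ici_self, fun t ht => ?_⟩
  · rcases lt_trichotomy t tm with h | h | h
    · exact absurd hst (hbelow t ⟨ht, h⟩).ne'
    · exact h
    · exact absurd hst (habove t h).ne
  · rcases le_total t tm with h | h
    · exact hmono.monotoneOn ⟨ht, h⟩ ⟨htm0.le, le_rfl⟩ h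
    · exact hanti.antitoneOn self_mem_Ici h h
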